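/- arXiv:2010.08767 — 2 statements merged into one kernel-verified Lean document; each statement's English description precedes it below -/
import Mathlib

section
/- Let $S_n = \sum_{k=1}^n X_k$ where $X_k = Y_\alpha - Y_\beta$ is the difference of independent exponential random variables with rates $\alpha > \beta > 0$. Then for $x > 0$, $\mathbb{P}\big(\sup_{n \ge 0} S_n \le x\big) = 1 - \frac{\beta}{\alpha} e^{-(\alpha - \beta)x}$. -/
/-!
Put `θ = α - β`, so that `E[exp (θ X)] = 1`, and let `τ` be the first time the walk exceeds
`x ≥ 0`. Since `exp (θ Sₙ)` is a martingale, the sum over `n` of `E[exp (θ S_(n+1)); τ = n + 1]`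
telescopes to `1 - lim E[exp (θ Sₙ); τ > n]`. On `{τ > n}` the integrand is at most
`exp (θ x / 2) exp (θ Sₙ / 2)`, whose mean decays geometrically because
`E[exp (θ X / 2)] = 4αβ / (α + β)² < 1`; so `E[exp (θ S_τ); τ < ∞] = 1`.
The `Exp(α)` component of an increment is memoryless, hence the overshoot `S_τ - x` is `Exp(α)`
whatever happened before `τ`, and `E[exp (θ S_τ); τ < ∞] = exp (θ x) (α / β) P(τ < ∞)`.
-/

open MeasureTheory ProbabilityTheory Real Set Filter Topology
open scoped ENNReal

lemma lintegral_exp_mul_Ioi {a : ℝ} (ha : a < 0) (c : ℝ) :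
    ∫⁻ t in Ioi c, ENNReal.ofReal (exp (a * t)) = ENNReal.ofReal (-exp (a * c) / a) := by
  rw [← ofReal_integral_eq_lintegral_ofReal (integrableOn_exp_mul_Ioi ha c)
    (ae_of_all _ fun _ ↦ (exp_pos _).le), integral_exp_mul_Ioi ha c]

lemma ENNReal.tsum_add_eq_of_eq_add_succ {f b : ℕ → ℝ≥0∞} {L : ℝ≥0∞}
    (hfb : ∀ n, f n = f (n + 1) + b n) (hf : Tendsto f atTop (𝓝 L)) : ∑' n, b n + L = f 0 := by
  have hsum : ∀ n, ∑ k ∈ Finset.range n, b k + f n = f 0 := fun n ↦ by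
    induction n with
    | zero => simp
    | succ n ih => rw [Finset.sum_range_succ, add_assoc, add_comm (b n), ← hfb, ih]
  exact tendsto_nhds_unique ((ENNReal.tendsto_nat_tsum b).add hf)
    (tendsto_const_nhds.congr fun n ↦ (hsum n).symm)

namespace ProbabilityTheory

lemma expMeasure_eq_withDensity (r : ℝ) :
    expMeasure r = volume.withDensity (exponentialPDF r) := rfl

instance (r : ℝ) : SFinite (expMeasure r) := by
  rw [expMeasure_eq_withDensity]
  infer_instance

lemma ae_pos_expMeasure (r : ℝ) : ∀ᵐ a ∂expMeasure r, 0 < a := by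
  simp only [ae_iff, not_lt, expMeasure_eq_withDensity]
  change volume.withDensity (exponentialPDF r) (Iic 0) = 0
  rw [withDensity_apply _ measurableSet_Iic, ← setLIntegral_congr Iio_ae_eq_Iic]
  exact lintegral_exponentialPDF_of_nonpos le_rfl

lemma lintegral_exp_mul_expMeasure_Ioi {r s d : ℝ} (hr : 0 ≤ r) (hs : s < r) (hd : 0 ≤ d) :
    ∫⁻ a in Ioi d, ENNReal.ofReal (exp (s * a)) ∂expMeasure r
      = ENNReal.ofReal (r / (r - s) * exp ((s - r) * d)) := by
  have hdens : ∀ a ∈ Ioi d, (exponentialPDF r * fun a ↦ ENNReal.ofReal (exp (s * a))) a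
      = ENNReal.ofReal r * ENNReal.ofReal (exp ((s - r) * a)) := fun a ha ↦ by
    rw [Pi.mul_apply, exponentialPDF_of_nonneg (hd.trans (le_of_lt ha)),
      ← ENNReal.ofReal_mul (by positivity), ← ENNReal.ofReal_mul hr, mul_assoc, ← exp_add]
    ring_nf
  rw [expMeasure_eq_withDensity, setLIntegral_withDensity_eq_setLIntegral_mul
      (f := exponentialPDF r) _ (measurable_exponentialPDFReal r).ennreal_ofReal (by fun_prop)
      measurableSet_Ioi,
    setLIntegral_congr_fun measurableSet_Ioi hdens, lintegral_const_mul _ (by fun_prop),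
    lintegral_exp_mul_Ioi (by linarith), ← ENNReal.ofReal_mul hr]
  rw [neg_div, ← div_neg, neg_sub]
  ring_nf

lemma lintegral_exp_mul_expMeasure {r s : ℝ} (hr : 0 ≤ r) (hs : s < r) :
    ∫⁻ a, ENNReal.ofReal (exp (s * a)) ∂expMeasure r = ENNReal.ofReal (r / (r - s)) := by
  rw [← Measure.restrict_eq_self_of_ae_mem (s := Ioi 0) (ae_pos_expMeasure r),
    lintegral_exp_mul_expMeasure_Ioi hr hs le_rfl, mul_zero, exp_zero, mul_one]

section expDiffMeasure

noncomputable def expDiffMeasure (α β : ℝ) : Measure ℝ :=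
  ((expMeasure α).prod (expMeasure β)).map fun p ↦ p.1 - p.2

variable {α β : ℝ}

lemma lintegral_exp_mul_expDiffMeasure {s : ℝ} (hα : 0 ≤ α) (hβ : 0 ≤ β) (hsβ : -β < s)
    (hsα : s < α) :
    ∫⁻ t, ENNReal.ofReal (exp (s * t)) ∂expDiffMeasure α β
      = ENNReal.ofReal (α / (α - s) * (β / (β + s))) := by
  have hexp : ∀ p : ℝ × ℝ, ENNReal.ofReal (exp (s * (p.1 - p.2)))
      = ENNReal.ofReal (exp (s * p.1)) * ENNReal.ofReal (exp (-s * p.2)) := fun p ↦ by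
    rw [← ENNReal.ofReal_mul (exp_pos _).le, ← exp_add]
    ring_nf
  rw [expDiffMeasure, lintegral_map (by fun_prop) (by fun_prop)]
  simp_rw [hexp]
  rw [lintegral_prod_mul (f := fun a ↦ ENNReal.ofReal (exp (s * a)))
      (g := fun b ↦ ENNReal.ofReal (exp (-s * b))) (by fun_prop) (by fun_prop),
    lintegral_exp_mul_expMeasure hα hsα,
    lintegral_exp_mul_expMeasure hβ (by linarith), ← ENNReal.ofReal_mul (by
      have := sub_pos.2 hsα; positivity), sub_neg_eq_add]

lemma setLIntegral_exp_mul_expDiffMeasure_Ioi {s c : ℝ} (hα : 0 < α) (hβ : 0 ≤ β)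
    (hsα : s < α) (hc : 0 ≤ c) :
    ∫⁻ t in Ioi c, ENNReal.ofReal (exp (s * t)) ∂expDiffMeasure α β
      = ENNReal.ofReal (α / (α - s) * (β / (β + α)) * exp ((s - α) * c)) := by
  have hinner : ∀ b, 0 < b → ∫⁻ a, (Ioi c).indicator (fun t ↦ ENNReal.ofReal (exp (s * t))) (a - b)
      ∂expMeasure α = ENNReal.ofReal (α / (α - s) * exp ((s - α) * c))
        * ENNReal.ofReal (exp (-α * b)) := fun b hb ↦ by
    have hshift : ∀ a, ENNReal.ofReal (exp (s * (a - b)))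
        = ENNReal.ofReal (exp (-s * b)) * ENNReal.ofReal (exp (s * a)) := fun a ↦ by
      rw [← ENNReal.ofReal_mul (exp_pos _).le, ← exp_add]
      ring_nf
    have hind : ∀ a, (Ioi c).indicator (fun t ↦ ENNReal.ofReal (exp (s * t))) (a - b)
        = (Ioi (c + b)).indicator (fun a ↦ ENNReal.ofReal (exp (s * (a - b)))) a := fun a ↦ by
      rw [← preimage_sub_const_Ioi, ← indicator_comp_right (fun a ↦ a - b)]
      rfl
    simp_rw [hind, hshift]
    rw [lintegral_indicator measurableSet_Ioi, lintegral_const_mul _ (by fun_prop),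
      lintegral_exp_mul_expMeasure_Ioi hα.le hsα (by linarith), ← ENNReal.ofReal_mul (exp_pos _).le,
      ← ENNReal.ofReal_mul (by have := sub_pos.2 hsα; positivity)]
    congr 1
    rw [mul_left_comm, mul_assoc, ← exp_add, ← exp_add]
    ring_nf
  have hf : Measurable ((Ioi c).indicator fun t ↦ ENNReal.ofReal (exp (s * t))) :=
    (by fun_prop : Measurable _).indicator measurableSet_Ioi
  rw [← lintegral_indicator measurableSet_Ioi, expDiffMeasure, lintegral_map hf (by fun_prop),
    lintegral_prod_symm' (fun p ↦ (Ioi c).indicator (fun t ↦ ENNReal.ofReal (exp (s * t)))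
      (p.1 - p.2)) (hf.comp (by fun_prop)), lintegral_congr_ae ((ae_pos_expMeasure β).mono hinner),
    lintegral_const_mul _ (by fun_prop), lintegral_exp_mul_expMeasure hβ (by linarith),
    ← ENNReal.ofReal_mul (by have := sub_pos.2 hsα; positivity)]
  congr 1
  rw [sub_neg_eq_add]
  ring

lemma lintegral_exp_sub_mul_expDiffMeasure (hβ : 0 < β) (hβα : β < α) :
    ∫⁻ t, ENNReal.ofReal (exp ((α - β) * t)) ∂expDiffMeasure α β = 1 := by
  rw [lintegral_exp_mul_expDiffMeasure (by linarith) hβ.le (by linarith) (by linarith),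
    sub_sub_cancel, add_sub_cancel, div_mul_div_comm, mul_comm α β,
    div_self (by have := hβ.trans hβα; positivity), ENNReal.ofReal_one]

lemma lintegral_exp_half_sub_mul_expDiffMeasure_lt_one (hβ : 0 < β) (hβα : β < α) :
    ∫⁻ t, ENNReal.ofReal (exp ((α - β) / 2 * t)) ∂expDiffMeasure α β < 1 := by
  rw [lintegral_exp_mul_expDiffMeasure (by linarith) hβ.le (by linarith) (by linarith),
    ENNReal.ofReal_lt_one]
  have hsum : 0 < α + β := by linarith
  calc α / (α - (α - β) / 2) * (β / (β + (α - β) / 2)) = 4 * α * β / (α + β) ^ 2 := by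
        rw [show α - (α - β) / 2 = (α + β) / 2 by ring, show β + (α - β) / 2 = (α + β) / 2 by ring]
        field_simp
        ring
    _ < 1 := by
        rw [div_lt_one (by positivity)]
        nlinarith [sq_pos_of_pos (sub_pos.2 hβα)]

lemma setLIntegral_exp_sub_mul_expDiffMeasure_Ioi (hβ : 0 < β) (hβα : β < α) {c : ℝ}
    (hc : 0 ≤ c) :
    ∫⁻ t in Ioi c, ENNReal.ofReal (exp ((α - β) * t)) ∂expDiffMeasure α β
      = ENNReal.ofReal (α / β) * ENNReal.ofReal (exp ((α - β) * c))
          * expDiffMeasure α β (Ioi c) := by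
  have hα : 0 < α := hβ.trans hβα
  have hmass := setLIntegral_exp_mul_expDiffMeasure_Ioi hα hβ.le hα hc
  simp only [zero_mul, exp_zero, ENNReal.ofReal_one, setLIntegral_one] at hmass
  rw [hmass, setLIntegral_exp_mul_expDiffMeasure_Ioi hα hβ.le (by linarith) hc,
    ← ENNReal.ofReal_mul (by positivity), ← ENNReal.ofReal_mul (by positivity)]
  congr 1
  rw [sub_sub_cancel, sub_sub_cancel_left, sub_zero, div_self hα.ne', one_mul, zero_sub]
  field_simp
  rw [← exp_add]
  ring_nf

end expDiffMeasure

lemma IndepFun.lintegral_comp_eq {Ω E F : Type*} [MeasurableSpace Ω] [MeasurableSpace E]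
    [MeasurableSpace F] {P : Measure Ω} [IsFiniteMeasure P] {Y : Ω → E} {Z : Ω → F}
    (h : IndepFun Y Z P) (hY : Measurable Y) (hZ : Measurable Z) {g : E → F → ℝ≥0∞}
    (hg : Measurable (Function.uncurry g)) :
    ∫⁻ ω, g (Y ω) (Z ω) ∂P = ∫⁻ ω, ∫⁻ t, g (Y ω) t ∂(P.map Z) ∂P := by
  change ∫⁻ ω, Function.uncurry g (Y ω, Z ω) ∂P = _
  rw [← lintegral_map hg (hY.prodMk hZ),
    (indepFun_iff_map_prod_eq_prod_map_map hY.aemeasurable hZ.aemeasurable).1 h,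
    lintegral_prod _ hg.aemeasurable, lintegral_map hg.lintegral_prod_right' hY]
  rfl

section RandomWalk

variable {Ω : Type*} {X : ℕ → Ω → ℝ} {x : ℝ} {n : ℕ}

def walk (X : ℕ → Ω → ℝ) (n : ℕ) (ω : Ω) : ℝ := ∑ i ∈ Finset.range n, X i ω

abbrev pastSigma (X : ℕ → Ω → ℝ) (n : ℕ) : MeasurableSpace Ω :=
  ⨆ i ∈ Iio n, MeasurableSpace.comap (X i) inferInstance

def stayBelow (X : ℕ → Ω → ℝ) (x : ℝ) (n : ℕ) : Set Ω := {ω | ∀ k ≤ n, walk X k ω ≤ x}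

lemma walk_succ (ω : Ω) : walk X (n + 1) ω = walk X n ω + X n ω := Finset.sum_range_succ _ _

lemma stayBelow_zero (hx : 0 ≤ x) : stayBelow X x 0 = univ := by
  ext ω
  simp [stayBelow, walk, hx]

lemma antitone_stayBelow : Antitone (stayBelow X x) :=
  fun _ _ hmn _ hω k hk ↦ hω k (hk.trans hmn)

lemma stayBelow_succ :
    stayBelow X x (n + 1) = stayBelow X x n ∩ {ω | walk X (n + 1) ω ≤ x} := by
  ext ω
  simp only [stayBelow, mem_inter_iff, mem_ofPred_eq, Nat.le_succ_iff, or_imp, forall_and,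
    forall_eq]

lemma stayBelow_diff_succ :
    stayBelow X x n \ stayBelow X x (n + 1) = stayBelow X x n ∩ {ω | x < walk X (n + 1) ω} := by
  ext ω
  simp [stayBelow_succ]

lemma iInter_stayBelow : ⋂ n, stayBelow X x n = {ω | ∀ n, walk X n ω ≤ x} := by
  ext ω
  simp only [stayBelow, mem_iInter, mem_ofPred_eq]
  exact ⟨fun h n ↦ h n n le_rfl, fun h _ k _ ↦ h k⟩

lemma measurable_walk_pastSigma {k : ℕ} (hk : k ≤ n) : Measurable[pastSigma X n] (walk X k) :=
  Finset.measurable_sum _ fun i hi ↦ (comap_measurable (X i)).mono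
    (le_iSup₂ (f := fun i (_ : i ∈ Iio n) ↦ MeasurableSpace.comap (X i) inferInstance) i
      ((Finset.mem_range.1 hi).trans_le hk)) le_rfl

lemma measurableSet_stayBelow_pastSigma : MeasurableSet[pastSigma X n] (stayBelow X x n) := by
  simp only [stayBelow, ofPred_forall]
  exact .iInter fun k ↦ .iInter fun hk ↦ measurableSet_le (measurable_walk_pastSigma hk)
    measurable_const

variable [MeasurableSpace Ω] {P : Measure Ω}

lemma pastSigma_le (hX : ∀ i, Measurable (X i)) : pastSigma X n ≤ ‹MeasurableSpace Ω› :=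
  iSup₂_le fun i _ ↦ (hX i).comap_le

lemma measurable_walk (hX : ∀ i, Measurable (X i)) (n : ℕ) : Measurable (walk X n) :=
  (measurable_walk_pastSigma le_rfl).mono (pastSigma_le hX) le_rfl

lemma measurableSet_stayBelow (hX : ∀ i, Measurable (X i)) (x : ℝ) (n : ℕ) :
    MeasurableSet (stayBelow X x n) :=
  pastSigma_le hX _ measurableSet_stayBelow_pastSigma

lemma indep_pastSigma (hX : ∀ i, Measurable (X i)) (hind : iIndepFun X P) :
    Indep (pastSigma X n) (MeasurableSpace.comap (X n) inferInstance) P := by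
  have := indep_iSup_of_disjoint (fun i ↦ (hX i).comap_le)
    ((iIndepFun_iff_iIndep _ _ _).1 hind) (S := Iio n) (T := {n}) (by simp)
  rwa [iSup_singleton] at this

lemma setLIntegral_walk_step [IsFiniteMeasure P] (hX : ∀ i, Measurable (X i))
    (hind : iIndepFun X P) {A : Set Ω} (hA : MeasurableSet[pastSigma X n] A)
    {g : ℝ → ℝ → ℝ≥0∞} (hg : Measurable (Function.uncurry g)) :
    ∫⁻ ω in A, g (walk X n ω) (X n ω) ∂P
      = ∫⁻ ω in A, ∫⁻ t, g (walk X n ω) t ∂(P.map (X n)) ∂P := by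
  -- `Y` carries `1_A` along with `Sₙ`, so one independence statement covers both.
  set Y : Ω → ℝ≥0∞ × ℝ := fun ω ↦ (A.indicator 1 ω, walk X n ω)
  have hY : Measurable[pastSigma X n] Y :=
    (measurable_const.indicator hA).prodMk (measurable_walk_pastSigma le_rfl)
  have hYZ : IndepFun Y (X n) P := (IndepFun_iff_Indep _ _ _).2 <|
    indep_of_indep_of_le_left (indep_pastSigma hX hind) hY.comap_le
  have hg' : Measurable (Function.uncurry fun (y : ℝ≥0∞ × ℝ) t ↦ y.1 * g y.2 t) :=
    measurable_fst.fst.mul (hg.comp (measurable_fst.snd.prodMk measurable_snd))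
  have hA' := pastSigma_le hX _ hA
  calc ∫⁻ ω in A, g (walk X n ω) (X n ω) ∂P
      = ∫⁻ ω, (Y ω).1 * g (Y ω).2 (X n ω) ∂P := by
        rw [← lintegral_indicator hA']
        congr with ω
        by_cases hω : ω ∈ A <;> simp [Y, hω]
    _ = ∫⁻ ω, ∫⁻ t, (Y ω).1 * g (Y ω).2 t ∂(P.map (X n)) ∂P :=
        hYZ.lintegral_comp_eq (hY.mono (pastSigma_le hX) le_rfl) (hX n) hg'
    _ = ∫⁻ ω in A, ∫⁻ t, g (walk X n ω) t ∂(P.map (X n)) ∂P := by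
        rw [← lintegral_indicator hA']
        congr with ω
        rw [lintegral_const_mul _ hg.of_uncurry_left]
        by_cases hω : ω ∈ A <;> simp [Y, hω]

noncomputable def mgfBelow (P : Measure Ω) (X : ℕ → Ω → ℝ) (x u : ℝ) (n : ℕ) : ℝ≥0∞ :=
  ∫⁻ ω in stayBelow X x n, ENNReal.ofReal (exp (u * walk X n ω)) ∂P

lemma mgfBelow_zero [IsProbabilityMeasure P] (hx : 0 ≤ x) (u : ℝ) : mgfBelow P X x u 0 = 1 := by
  simp [mgfBelow, stayBelow_zero hx, walk]

lemma setLIntegral_exp_walk_succ [IsFiniteMeasure P] (hX : ∀ i, Measurable (X i))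
    (hind : iIndepFun X P) (u : ℝ) (n : ℕ) :
    ∫⁻ ω in stayBelow X x n, ENNReal.ofReal (exp (u * walk X (n + 1) ω)) ∂P
      = mgfBelow P X x u n * ∫⁻ t, ENNReal.ofReal (exp (u * t)) ∂(P.map (X n)) := by
  have hexp : ∀ s t, ENNReal.ofReal (exp (u * (s + t)))
      = ENNReal.ofReal (exp (u * s)) * ENNReal.ofReal (exp (u * t)) := fun s t ↦ by
    rw [← ENNReal.ofReal_mul (exp_pos _).le, ← exp_add, mul_add]
  have hm : Measurable fun ω ↦ ENNReal.ofReal (exp (u * walk X n ω)) := by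
    have := measurable_walk hX n
    fun_prop
  simp_rw [walk_succ, hexp]
  rw [setLIntegral_walk_step hX hind measurableSet_stayBelow_pastSigma
    (g := fun s t ↦ ENNReal.ofReal (exp (u * s)) * ENNReal.ofReal (exp (u * t))) (by fun_prop)]
  simp_rw [lintegral_const_mul _ (by fun_prop : Measurable fun t ↦ ENNReal.ofReal (exp (u * t)))]
  rw [lintegral_mul_const _ hm, mgfBelow]

lemma mgfBelow_le_pow [IsProbabilityMeasure P] (hX : ∀ i, Measurable (X i)) (hind : iIndepFun X P)
    {μ : Measure ℝ} (hlaw : ∀ n, P.map (X n) = μ) (hx : 0 ≤ x) (u : ℝ) (n : ℕ) :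
    mgfBelow P X x u n ≤ (∫⁻ t, ENNReal.ofReal (exp (u * t)) ∂μ) ^ n := by
  induction n with
  | zero => rw [mgfBelow_zero hx, pow_zero]
  | succ n ih =>
    calc mgfBelow P X x u (n + 1)
        ≤ ∫⁻ ω in stayBelow X x n, ENNReal.ofReal (exp (u * walk X (n + 1) ω)) ∂P :=
          lintegral_mono_set (antitone_stayBelow n.le_succ)
      _ ≤ _ := by
          rw [setLIntegral_exp_walk_succ hX hind, hlaw, pow_succ]
          gcongr

lemma mgfBelow_le_of_le (hX : ∀ i, Measurable (X i)) {u θ : ℝ} (hu : u ≤ θ) (n : ℕ) :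
    mgfBelow P X x θ n ≤ ENNReal.ofReal (exp ((θ - u) * x)) * mgfBelow P X x u n := by
  rw [mgfBelow, mgfBelow, ← lintegral_const_mul' _ _ ENNReal.ofReal_ne_top]
  refine setLIntegral_mono' (measurableSet_stayBelow hX _ _) fun ω hω ↦ ?_
  rw [← ENNReal.ofReal_mul (exp_pos _).le, ← exp_add]
  gcongr
  nlinarith [hω n le_rfl]

lemma tendsto_mgfBelow_zero [IsProbabilityMeasure P] (hX : ∀ i, Measurable (X i))
    (hind : iIndepFun X P) {μ : Measure ℝ} (hlaw : ∀ n, P.map (X n) = μ) (hx : 0 ≤ x)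
    {u θ : ℝ} (hu : u ≤ θ) (hμu : ∫⁻ t, ENNReal.ofReal (exp (u * t)) ∂μ < 1) :
    Tendsto (mgfBelow P X x θ) atTop (𝓝 0) := by
  have hpow := ENNReal.Tendsto.const_mul (ENNReal.tendsto_pow_atTop_nhds_zero_of_lt_one hμu)
    (a := ENNReal.ofReal (exp ((θ - u) * x))) (Or.inr ENNReal.ofReal_ne_top)
  rw [mul_zero] at hpow
  exact tendsto_of_tendsto_of_tendsto_of_le_of_le tendsto_const_nhds hpow (fun _ ↦ zero_le)
    fun n ↦ (mgfBelow_le_of_le hX hu n).trans (by gcongr; exact mgfBelow_le_pow hX hind hlaw hx u n)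

lemma mgfBelow_eq_succ_add [IsFiniteMeasure P] (hX : ∀ i, Measurable (X i)) (hind : iIndepFun X P)
    {θ : ℝ} (n : ℕ) (hθ : ∫⁻ t, ENNReal.ofReal (exp (θ * t)) ∂(P.map (X n)) = 1) :
    mgfBelow P X x θ n = mgfBelow P X x θ (n + 1)
      + ∫⁻ ω in stayBelow X x n \ stayBelow X x (n + 1),
          ENNReal.ofReal (exp (θ * walk X (n + 1) ω)) ∂P := by
  rw [← mul_one (mgfBelow P X x θ n), ← hθ, ← setLIntegral_exp_walk_succ hX hind,
    ← lintegral_inter_add_sdiff _ _ (measurableSet_stayBelow hX _ _),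
    inter_eq_right.2 (antitone_stayBelow n.le_succ), mgfBelow]

lemma setLIntegral_stayBelow_diff_succ [IsFiniteMeasure P] (hX : ∀ i, Measurable (X i))
    (hind : iIndepFun X P) {f : ℝ → ℝ≥0∞} (hf : Measurable f) (n : ℕ) :
    ∫⁻ ω in stayBelow X x n \ stayBelow X x (n + 1), f (walk X (n + 1) ω) ∂P
      = ∫⁻ ω in stayBelow X x n,
          ∫⁻ t in Ioi (x - walk X n ω), f (walk X n ω + t) ∂(P.map (X n)) ∂P := by
  set g : ℝ → ℝ → ℝ≥0∞ := fun s t ↦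
    {p : ℝ × ℝ | x < p.1 + p.2}.indicator (fun p ↦ f (p.1 + p.2)) (s, t)
  have hg : Measurable (Function.uncurry g) :=
    (hf.comp measurable_add).indicator (measurableSet_lt measurable_const measurable_add)
  have hinner : ∀ s, ∫⁻ t, g s t ∂(P.map (X n)) = ∫⁻ t in Ioi (x - s), f (s + t) ∂(P.map (X n)) :=
    fun s ↦ by
      rw [← lintegral_indicator measurableSet_Ioi]
      congr with t
      simp [g, indicator_apply, sub_lt_iff_lt_add']
  rw [stayBelow_diff_succ, inter_comm, ← setLIntegral_indicator (measurableSet_lt measurable_const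
    (measurable_walk hX (n + 1)))]
  simp_rw [← hinner]
  rw [← setLIntegral_walk_step hX hind measurableSet_stayBelow_pastSigma hg]
  congr with ω
  simp [g, indicator_apply, walk_succ]

lemma setLIntegral_exp_stayBelow_diff_succ [IsFiniteMeasure P] (hX : ∀ i, Measurable (X i))
    (hind : iIndepFun X P) {θ : ℝ} {κ : ℝ≥0∞} (n : ℕ)
    (htail : ∀ c, 0 ≤ c → ∫⁻ t in Ioi c, ENNReal.ofReal (exp (θ * t)) ∂(P.map (X n))
      = κ * ENNReal.ofReal (exp (θ * c)) * P.map (X n) (Ioi c)) :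
    ∫⁻ ω in stayBelow X x n \ stayBelow X x (n + 1), ENNReal.ofReal (exp (θ * walk X (n + 1) ω)) ∂P
      = κ * ENNReal.ofReal (exp (θ * x)) * P (stayBelow X x n \ stayBelow X x (n + 1)) := by
  have hmono : Monotone fun s ↦ P.map (X n) (Ioi (x - s)) :=
    fun s s' hss' ↦ measure_mono (Ioi_subset_Ioi (by linarith))
  have hm : Measurable fun ω ↦ P.map (X n) (Ioi (x - walk X n ω)) :=
    hmono.measurable.comp (measurable_walk hX n)
  rw [← setLIntegral_one, setLIntegral_stayBelow_diff_succ hX hind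
    (f := fun s ↦ ENNReal.ofReal (exp (θ * s))) (by fun_prop) n,
    setLIntegral_stayBelow_diff_succ hX hind (f := fun _ ↦ 1) measurable_const n]
  simp_rw [setLIntegral_one]
  rw [← lintegral_const_mul _ hm]
  refine setLIntegral_congr_fun (measurableSet_stayBelow hX _ _) fun ω hω ↦ ?_
  have hexp : ∀ t, ENNReal.ofReal (exp (θ * (walk X n ω + t)))
      = ENNReal.ofReal (exp (θ * walk X n ω)) * ENNReal.ofReal (exp (θ * t)) := fun t ↦ by
    rw [← ENNReal.ofReal_mul (exp_pos _).le, ← exp_add, mul_add]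
  simp_rw [hexp]
  rw [lintegral_const_mul _ (by fun_prop), htail _ (sub_nonneg.2 (hω n le_rfl)), ← mul_assoc,
    mul_left_comm _ κ, mul_assoc κ, ← ENNReal.ofReal_mul (exp_pos _).le, ← exp_add, ← mul_add,
    add_sub_cancel, mul_assoc]

/-- `htail` says that for every level `c ≥ 0` the conditional mean of `exp (θ (t - c))` given
`t > c` is `κ`; for the exponential walk this is the memorylessness of `Exp(α)`. -/
theorem measure_forall_walk_le [IsProbabilityMeasure P] (hX : ∀ i, Measurable (X i))
    (hind : iIndepFun X P) {μ : Measure ℝ} (hlaw : ∀ n, P.map (X n) = μ) (hx : 0 ≤ x)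
    {u θ : ℝ} {κ : ℝ≥0∞} (hθ : ∫⁻ t, ENNReal.ofReal (exp (θ * t)) ∂μ = 1) (hu : u ≤ θ)
    (hμu : ∫⁻ t, ENNReal.ofReal (exp (u * t)) ∂μ < 1)
    (htail : ∀ c, 0 ≤ c → ∫⁻ t in Ioi c, ENNReal.ofReal (exp (θ * t)) ∂μ
      = κ * ENNReal.ofReal (exp (θ * c)) * μ (Ioi c)) :
    P {ω | ∀ n, walk X n ω ≤ x} = 1 - (κ * ENNReal.ofReal (exp (θ * x)))⁻¹ := by
  have hA := measurableSet_stayBelow hX x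
  have hexit : ∑' n, P (stayBelow X x n \ stayBelow X x (n + 1)) + P (⋂ n, stayBelow X x n)
      = 1 := by
    rw [← measure_univ (μ := P), ← stayBelow_zero hx]
    refine ENNReal.tsum_add_eq_of_eq_add_succ (fun n ↦ ?_) (tendsto_measure_iInter_atTop
      (fun n ↦ (hA n).nullMeasurableSet) antitone_stayBelow ⟨0, measure_ne_top _ _⟩)
    have := measure_inter_add_sdiff (μ := P) (stayBelow X x n) (hA (n + 1))
    rwa [inter_eq_right.2 (antitone_stayBelow n.le_succ), eq_comm] at this
  have hcross : ∑' n, P (stayBelow X x n \ stayBelow X x (n + 1))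
      = (κ * ENNReal.ofReal (exp (θ * x)))⁻¹ := by
    refine ENNReal.eq_inv_of_mul_eq_one_left ?_
    rw [mul_comm, ← ENNReal.tsum_mul_left, ← mgfBelow_zero (P := P) (X := X) hx θ,
      ← add_zero (∑' _, _)]
    refine ENNReal.tsum_add_eq_of_eq_add_succ (fun n ↦ ?_)
      (tendsto_mgfBelow_zero hX hind hlaw hx hu hμu)
    rw [mgfBelow_eq_succ_add hX hind n (by rwa [hlaw]),
      setLIntegral_exp_stayBelow_diff_succ hX hind n (by rwa [hlaw])]
  rw [hcross, add_comm] at hexit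
  rw [← iInter_stayBelow]
  exact ENNReal.eq_sub_of_add_eq (ne_top_of_le_ne_top ENNReal.one_ne_top (hexit ▸ le_add_self))
    hexit

end RandomWalk

end ProbabilityTheory

theorem exponential_walk_sup_distribution {Ω : Type*} [MeasurableSpace Ω] (P : Measure Ω)
    [IsProbabilityMeasure P] (α β : ℝ) (hβ : 0 < β) (hαβ : β < α)
    (X : ℕ → Ω → ℝ) (hmeas : ∀ i, Measurable (X i))
    (hindep : iIndepFun X P)
    (hlaw : ∀ k, P.map (X k) =
      Measure.map (fun p : ℝ × ℝ => p.1 - p.2) ((expMeasure α).prod (expMeasure β)))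
    (x : ℝ) (hx : 0 < x) :
    (P {ω | ∀ n : ℕ, ∑ i ∈ Finset.range n, X i ω ≤ x}).toReal
      = 1 - β / α * Real.exp (-(α - β) * x) := by
  have hα : 0 < α := hβ.trans hαβ
  have hsup := measure_forall_walk_le hmeas hindep hlaw hx.le (u := (α - β) / 2)
    (lintegral_exp_sub_mul_expDiffMeasure hβ hαβ) (by linarith)
    (lintegral_exp_half_sub_mul_expDiffMeasure_lt_one hβ hαβ)
    fun c hc ↦ setLIntegral_exp_sub_mul_expDiffMeasure_Ioi hβ hαβ hc
  have hinv : (ENNReal.ofReal (α / β) * ENNReal.ofReal (exp ((α - β) * x)))⁻¹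
      = ENNReal.ofReal (β / α * exp (-(α - β) * x)) := by
    rw [← ENNReal.ofReal_mul (by positivity), ← ENNReal.ofReal_inv_of_pos (by positivity),
      mul_inv, inv_div, ← exp_neg, neg_mul]
  have hle : β / α * exp (-(α - β) * x) ≤ 1 :=
    mul_le_one₀ ((div_le_one hα).2 hαβ.le) (by positivity)
      (exp_le_one_iff.2 (by nlinarith))
  change (P {ω | ∀ n, walk X n ω ≤ x}).toReal = _
  rw [hsup, hinv, ENNReal.toReal_sub_of_le (ENNReal.ofReal_le_one.2 hle) ENNReal.one_ne_top,
    ENNReal.toReal_one, ENNReal.toReal_ofReal (by positivity)]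
end

section
/- Let $X$ be a random variable with MGF $M$ finite on a neighborhood of $0$, with $\mathbb{E}[X] = \mu \le 0$, $\mathbb{E}[X^2] = \mu_2 \ge \sigma_*^2 > 0$, and $|M^{(3)}(\theta)| \le C_M$ on the relevant interval. Let $\theta_0 \in [0, 2\sigma_*^{-2}|\mu|]$ satisfy $M'(\theta_0) = 0$, and set $c_m = 2\sigma_*^{-2}$. If $\frac{2}{3}c_m|\mu| \le 1$, $c_m\mu^2 + C_M c_m^3|\mu|^3 \le \frac{1}{2}$, and $C_M c_m^3 |\mu| \le 1$, then $\big(M(2\theta_0)/M(\theta_0)^2\big)^{\mu^{-2}/2} \le e^{2C_M c_m^2 + 4 c_m}$. -/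
/-!
Expand the MGF `M` to second order at `0`, with a Lagrange remainder controlled by `C_M`, and
expand `M'` to first order. The critical-point equation `M'(θ₀) = 0` then says
`μ₂ θ₀² = -μ θ₀ + O(C_M θ₀³)`, which cancels the linear terms:
`M(2θ₀) ≤ 1 + (7/3) C_M θ₀³` and `M(θ₀) ≥ 1 - L` with `L = |μ| θ₀ / 2 + (5/12) C_M θ₀³ ≤ 1/2`.
Since `1 + c ≤ eᶜ` and `(1 - L)⁻¹ ≤ e^{2L}`, the ratio is at most `exp (2 |μ| θ₀ + 4 C_M θ₀³)`,
and `θ₀ ≤ c_m |μ|` makes this exponent `O(μ²)`.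
-/

open MeasureTheory ProbabilityTheory Real Set
open scoped Nat

lemma abs_sub_taylor_le_of_abs_iteratedDeriv_le {f : ℝ → ℝ} {x₀ x C : ℝ} {n : ℕ} (hx : x₀ ≤ x)
    (hf : ∀ y ∈ Icc x₀ x, ContDiffAt ℝ (n + 1) f y)
    (hC : ∀ y ∈ Icc x₀ x, |iteratedDeriv (n + 1) f y| ≤ C) :
    |f x - ∑ k ∈ Finset.range (n + 1), iteratedDeriv k f x₀ * (x - x₀) ^ k / k !|
      ≤ C * (x - x₀) ^ (n + 1) / (n + 1)! := by
  rcases hx.eq_or_lt with rfl | hlt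
  · simp [Finset.sum_range_succ']
  have htaylor : taylorWithinEval f n (Icc x₀ x) x₀ x
      = ∑ k ∈ Finset.range (n + 1), iteratedDeriv k f x₀ * (x - x₀) ^ k / k ! := by
    rw [taylor_within_apply]
    refine Finset.sum_congr rfl fun k hk => ?_
    rw [iteratedDerivWithin_eq_iteratedDeriv (uniqueDiffOn_Icc hlt)
      ((hf x₀ (left_mem_Icc.2 hx)).of_le (by exact_mod_cast (Finset.mem_range.1 hk).le))
      (left_mem_Icc.2 hx), smul_eq_mul]
    ring
  obtain ⟨ξ, hξ, hrem⟩ := taylor_mean_remainder_lagrange_iteratedDeriv hlt.ne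
    (by rw [uIcc_of_le hx]; exact fun y hy => (hf y hy).contDiffWithinAt)
  rw [uIcc_of_le hx, htaylor] at hrem
  rw [uIoo_of_le hx] at hξ
  rw [hrem, abs_div, abs_mul, abs_of_nonneg (pow_nonneg (sub_nonneg.2 hx) _),
    Nat.abs_cast]
  gcongr
  exact hC ξ (Ioo_subset_Icc_self hξ)

section Mgf

variable {Ω : Type*} [MeasurableSpace Ω] {P : Measure Ω} {X : Ω → ℝ} {t C : ℝ}

lemma abs_mgf_sub_taylor_le [IsProbabilityMeasure P] (ht : 0 ≤ t)
    (hint : Icc 0 t ⊆ interior (integrableExpSet X P))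
    (hC : ∀ y ∈ Icc 0 t, |iteratedDeriv 3 (mgf X P) y| ≤ C) :
    |mgf X P t - (1 + P[X] * t + P[X ^ 2] * t ^ 2 / 2)| ≤ C * t ^ 3 / 6 := by
  have h := abs_sub_taylor_le_of_abs_iteratedDeriv_le (n := 2) ht
    (fun y hy => (analyticAt_mgf (hint hy)).contDiffAt) hC
  have h0 := hint (left_mem_Icc.2 ht)
  simpa [Finset.sum_range_succ, iteratedDeriv_mgf_zero h0, Nat.factorial] using h

lemma abs_deriv_mgf_sub_taylor_le (ht : 0 ≤ t)
    (hint : Icc 0 t ⊆ interior (integrableExpSet X P))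
    (hC : ∀ y ∈ Icc 0 t, |iteratedDeriv 3 (mgf X P) y| ≤ C) :
    |deriv (mgf X P) t - (P[X] + P[X ^ 2] * t)| ≤ C * t ^ 2 / 2 := by
  have hC' : ∀ y ∈ Icc 0 t, |iteratedDeriv 2 (deriv (mgf X P)) y| ≤ C := by
    simpa only [← iteratedDeriv_succ'] using hC
  have h := abs_sub_taylor_le_of_abs_iteratedDeriv_le (n := 1) ht
    (fun y hy => (analyticAt_mgf (hint hy)).deriv.contDiffAt) hC'
  have h0 := hint (left_mem_Icc.2 ht)
  simpa [Finset.sum_range_succ, ← iteratedDeriv_succ', iteratedDeriv_mgf_zero h0, Nat.factorial]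
    using h

lemma abs_second_moment_mul_sq_add_le_of_deriv_mgf_eq_zero (ht : 0 ≤ t)
    (hint : Icc 0 t ⊆ interior (integrableExpSet X P)) (hcrit : deriv (mgf X P) t = 0)
    (hC : ∀ y ∈ Icc 0 t, |iteratedDeriv 3 (mgf X P) y| ≤ C) :
    |P[X ^ 2] * t ^ 2 + P[X] * t| ≤ C * t ^ 3 / 2 := by
  have h := abs_deriv_mgf_sub_taylor_le ht hint hC
  rw [hcrit, zero_sub, abs_neg] at h
  calc |P[X ^ 2] * t ^ 2 + P[X] * t| = |P[X] + P[X ^ 2] * t| * t := by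
        rw [show P[X ^ 2] * t ^ 2 + P[X] * t = (P[X] + P[X ^ 2] * t) * t by ring, abs_mul,
          abs_of_nonneg ht]
    _ ≤ C * t ^ 2 / 2 * t := by gcongr
    _ = C * t ^ 3 / 2 := by ring

lemma mgf_two_mul_le_of_deriv_mgf_eq_zero [IsProbabilityMeasure P] (ht : 0 ≤ t)
    (hint : Icc 0 (2 * t) ⊆ interior (integrableExpSet X P)) (hcrit : deriv (mgf X P) t = 0)
    (hC : ∀ y ∈ Icc 0 (2 * t), |iteratedDeriv 3 (mgf X P) y| ≤ C) :
    mgf X P (2 * t) ≤ 1 + 7 / 3 * (C * t ^ 3) := by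
  have hsub : Icc 0 t ⊆ Icc 0 (2 * t) := Icc_subset_Icc_right (by linarith)
  have htaylor := (abs_le.1 (abs_mgf_sub_taylor_le (by linarith) hint hC)).2
  have hcancel := (abs_le.1 (abs_second_moment_mul_sq_add_le_of_deriv_mgf_eq_zero ht
    (hsub.trans hint) hcrit fun y hy => hC y (hsub hy))).2
  linarith

lemma one_sub_le_mgf_of_deriv_mgf_eq_zero [IsProbabilityMeasure P] (ht : 0 ≤ t)
    (hint : Icc 0 t ⊆ interior (integrableExpSet X P)) (hcrit : deriv (mgf X P) t = 0)
    (hC : ∀ y ∈ Icc 0 t, |iteratedDeriv 3 (mgf X P) y| ≤ C) :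
    1 - (-P[X] * t / 2 + 5 / 12 * (C * t ^ 3)) ≤ mgf X P t := by
  have htaylor := (abs_le.1 (abs_mgf_sub_taylor_le ht hint hC)).1
  have hcancel := (abs_le.1
    (abs_second_moment_mul_sq_add_le_of_deriv_mgf_eq_zero ht hint hcrit hC)).1
  linarith

end Mgf

lemma inv_one_sub_le_exp_two_mul {x : ℝ} (hx0 : 0 ≤ x) (hx : x ≤ 1 / 2) :
    (1 - x)⁻¹ ≤ exp (2 * x) := by
  rw [inv_le_iff_one_le_mul₀ (by linarith)]
  calc 1 ≤ (1 + 2 * x) * (1 - x) := by nlinarith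
    _ ≤ exp (2 * x) * (1 - x) := by
        gcongr
        · linarith
        · linarith [add_one_le_exp (2 * x)]

lemma div_sq_le_exp_of_le_one_add {N D c L : ℝ} (hN : N ≤ 1 + c) (hD : 1 - L ≤ D) (hL0 : 0 ≤ L)
    (hL : L ≤ 1 / 2) : N / D ^ 2 ≤ exp (c + 4 * L) := by
  have hpos : 0 < 1 - L := by linarith
  calc N / D ^ 2 ≤ exp c / (1 - L) ^ 2 :=
        div_le_div₀ (exp_pos c).le (hN.trans (by linarith [add_one_le_exp c])) (by positivity)
          (by gcongr)
    _ = exp c * ((1 - L)⁻¹) ^ 2 := by rw [inv_pow, div_eq_mul_inv]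
    _ ≤ exp c * exp (2 * L) ^ 2 := by
        gcongr
        exact inv_one_sub_le_exp_two_mul hL0 hL
    _ = exp (c + 4 * L) := by rw [sq, ← exp_add, ← exp_add]; ring_nf

lemma tilted_exponent_le {m C c : ℝ} (hc : 0 < c) (hC : 0 ≤ C)
    (h2 : c * m ^ 2 + C * c ^ 3 * |m| ^ 3 ≤ 1 / 2) (h3 : C * c ^ 3 * |m| ≤ 1) :
    (2 * (c * m ^ 2) + 4 * (C * c ^ 3 * |m| ^ 3)) * ((m ^ 2)⁻¹ / 2) ≤ 2 * C * c ^ 2 + 4 * c := by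
  rcases eq_or_ne m 0 with rfl | hm
  · rw [sq, mul_zero, inv_zero, zero_div, mul_zero]
    positivity
  have hm2 : 0 < |m| := abs_pos.2 hm
  have hreduce : (2 * (c * m ^ 2) + 4 * (C * c ^ 3 * |m| ^ 3)) * ((m ^ 2)⁻¹ / 2)
      = c + 2 * (C * c ^ 3 * |m|) := by
    rw [← sq_abs]
    field_simp
    ring
  rw [hreduce]
  rcases le_or_gt (c * |m|) 1 with hsmall | hlarge
  · nlinarith [mul_nonneg hC (sq_nonneg c)]
  · -- `|m| < c * m ^ 2 ≤ 1 / 2`, so `c > 1 / |m| > 2`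
    have hm_half : |m| < 1 / 2 := by
      have : 0 ≤ C * c ^ 3 * |m| ^ 3 := by positivity
      nlinarith [sq_abs m, mul_lt_mul_of_pos_right hlarge hm2]
    have hc2 : 2 < c := by nlinarith
    nlinarith [mul_nonneg hC (sq_nonneg c)]

theorem tilted_second_moment_ratio_bound_general {Ω : Type*} [MeasurableSpace Ω] (P : Measure Ω)
    [IsProbabilityMeasure P] (X : Ω → ℝ)
    (a : ℝ)
    (hfin : ∀ θ ∈ Set.Ioo (-a) a, Integrable (fun ω => Real.exp (θ * X ω)) P)
    (μ σs2 CM θ0 cm : ℝ)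
    (hμ : μ = ∫ ω, X ω ∂P) (hμ0 : μ ≤ 0)
    (hσs : 0 < σs2)
    (hcm : cm = 2 * σs2⁻¹)
    (hθ0mem : θ0 ∈ Set.Icc 0 (cm * |μ|)) (h2θ0 : 2 * θ0 < a)
    (hcrit : deriv (mgf X P) θ0 = 0)
    (hM3 : ∀ θ ∈ Set.Icc 0 (2 * θ0), |iteratedDeriv 3 (mgf X P) θ| ≤ CM)
    (hc2 : cm * μ ^ 2 + CM * cm ^ 3 * |μ| ^ 3 ≤ 1 / 2)
    (hc3 : CM * cm ^ 3 * |μ| ≤ 1) :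
    (mgf X P (2 * θ0) / (mgf X P θ0) ^ 2) ^ ((μ ^ 2)⁻¹ / 2)
      ≤ Real.exp (2 * CM * cm ^ 2 + 4 * cm) := by
  obtain ⟨hθ0, hθ0le⟩ := hθ0mem
  have hcm0 : 0 < cm := by rw [hcm]; positivity
  have hCM : 0 ≤ CM := (abs_nonneg _).trans (hM3 0 ⟨le_rfl, by linarith⟩)
  have hint : Icc 0 (2 * θ0) ⊆ interior (integrableExpSet X P) :=
    fun y hy => interior_maximal hfin isOpen_Ioo ⟨by linarith [hy.1], by linarith [hy.2]⟩
  have hsub : Icc 0 θ0 ⊆ Icc 0 (2 * θ0) := Icc_subset_Icc_right (by linarith)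
  have hN := mgf_two_mul_le_of_deriv_mgf_eq_zero hθ0 hint hcrit hM3
  have hD := one_sub_le_mgf_of_deriv_mgf_eq_zero hθ0 (hsub.trans hint) hcrit
    fun y hy => hM3 y (hsub hy)
  rw [← hμ] at hD
  have hA : -μ * θ0 ≤ cm * μ ^ 2 := by
    nlinarith [mul_le_mul_of_nonneg_left hθ0le (abs_nonneg μ), abs_of_nonpos hμ0, sq_abs μ]
  have hB : CM * θ0 ^ 3 ≤ CM * cm ^ 3 * |μ| ^ 3 := by rw [mul_assoc, ← mul_pow]; gcongr
  have hL0 : 0 ≤ -μ * θ0 / 2 + 5 / 12 * (CM * θ0 ^ 3) := by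
    linarith [mul_nonneg (neg_nonneg.2 hμ0) hθ0, mul_nonneg hCM (pow_nonneg hθ0 3)]
  have hL : -μ * θ0 / 2 + 5 / 12 * (CM * θ0 ^ 3) ≤ 1 / 2 := by
    linarith [show 0 ≤ CM * cm ^ 3 * |μ| ^ 3 by positivity]
  calc _ ≤ exp (7 / 3 * (CM * θ0 ^ 3) + 4 * (-μ * θ0 / 2 + 5 / 12 * (CM * θ0 ^ 3)))
          ^ ((μ ^ 2)⁻¹ / 2) :=
        rpow_le_rpow (div_nonneg mgf_nonneg (sq_nonneg _))
          (div_sq_le_exp_of_le_one_add hN hD hL0 hL) (by positivity)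
    _ ≤ exp ((2 * (cm * μ ^ 2) + 4 * (CM * cm ^ 3 * |μ| ^ 3)) * ((μ ^ 2)⁻¹ / 2)) := by
        rw [← exp_mul]
        exact exp_le_exp.2 (mul_le_mul_of_nonneg_right (by linarith) (by positivity))
    _ ≤ _ := exp_le_exp.2 (tilted_exponent_le hcm0 hCM hc2 hc3)

theorem tilted_second_moment_ratio_bound {Ω : Type*} [MeasurableSpace Ω] (P : Measure Ω)
    [IsProbabilityMeasure P] (X : Ω → ℝ) (hX : Measurable X)
    (a : ℝ) (ha : 0 < a)
    (hfin : ∀ θ ∈ Set.Ioo (-a) a, Integrable (fun ω => Real.exp (θ * X ω)) P)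
    (μ μ2 σs2 CM θ0 cm : ℝ)
    (hμ : μ = ∫ ω, X ω ∂P) (hμ0 : μ ≤ 0)
    (hμ2 : μ2 = ∫ ω, X ω ^ 2 ∂P) (hσs : 0 < σs2) (hμ2lb : σs2 ≤ μ2)
    (hcm : cm = 2 * σs2⁻¹)
    (hθ0mem : θ0 ∈ Set.Icc 0 (cm * |μ|)) (h2θ0 : 2 * θ0 < a)
    (hcrit : deriv (mgf X P) θ0 = 0)
    (hM3 : ∀ θ ∈ Set.Icc 0 (2 * θ0), |iteratedDeriv 3 (mgf X P) θ| ≤ CM)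
    (hc1 : 2 / 3 * cm * |μ| ≤ 1)
    (hc2 : cm * μ ^ 2 + CM * cm ^ 3 * |μ| ^ 3 ≤ 1 / 2)
    (hc3 : CM * cm ^ 3 * |μ| ≤ 1) :
    (mgf X P (2 * θ0) / (mgf X P θ0) ^ 2) ^ ((μ ^ 2)⁻¹ / 2)
      ≤ Real.exp (2 * CM * cm ^ 2 + 4 * cm) :=
  tilted_second_moment_ratio_bound_general P X a hfin μ σs2 CM θ0 cm hμ hμ0 hσs hcm hθ0mem h2θ0
    hcrit hM3 hc2 hc3
end
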